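/- arXiv:1704.00946 — 3 statements merged into one kernel-verified Lean document; each statement's English description precedes it below -/
import Mathlib

section
/- Let ℳ*_q(𝕏) denote the class of functions m: 𝕏 → ℝ^q of the form m(x) = Σ_{z=1}^{n} [π_z φ_p(x; μ_z, Σ_z) / Σ_{ζ=1}^{n} π_ζ φ_p(x; μ_ζ, Σ_ζ)] · a_z, where n ∈ ℕ, π_z > 0 with Σ_z π_z = 1, μ_z ∈ ℝ^p, Σ_z symmetric positive-definite, and a_z ∈ ℝ^q. If m₁, m₂ ∈ ℳ*_q(𝕏), then m₁ + m₂ ∈ ℳ*_q(𝕏). -/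
/-!
Completing the square shows that the product of two Gaussian densities in `x` is a positive
multiple `c` of a Gaussian density. Hence the product `w₁ z (x) * w₂ ζ (x)` of the gating weights
of `m₁` and `m₂` is the gating weight of a Gaussian gate indexed by pairs `(z, ζ)`, with mixing
weights proportional to `π₁ z * π₂ ζ * c z ζ`. Since each family of gating weights sums to `1`,
`m₁ + m₂ = ∑ z, ∑ ζ, (w₁ z * w₂ ζ) • (a₁ z + a₂ ζ)`, which is of the required form.
-/

open scoped Matrix BigOperators

/-- The multivariate Gaussian density. -/
noncomputable def gaussPDF {ι : Type*} [Fintype ι] [DecidableEq ι] (μ : ι → ℝ)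
    (S : Matrix ι ι ℝ) (x : ι → ℝ) : ℝ :=
  (Real.sqrt ((2 * Real.pi) ^ (Fintype.card ι) * S.det))⁻¹ *
    Real.exp (-(1 / 2) * ((x - μ) ⬝ᵥ (S⁻¹ *ᵥ (x - μ))))

/-- Membership in ℳ*_q(𝕏): Gaussian-gated mean functions with constant experts. -/
def MemMStar {p q : ℕ} (𝕏 : Set (Fin p → ℝ)) (m : (Fin p → ℝ) → Fin q → ℝ) : Prop :=
  ∃ (n : ℕ) (π : Fin n → ℝ) (μ : Fin n → Fin p → ℝ)
    (S : Fin n → Matrix (Fin p) (Fin p) ℝ) (a : Fin n → Fin q → ℝ),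
    0 < n ∧ (∀ z, 0 < π z) ∧ (∑ z, π z = 1) ∧ (∀ z, (S z).PosDef) ∧
    ∀ x ∈ 𝕏, m x = ∑ z, ((π z * gaussPDF (μ z) (S z) x) /
        (∑ ζ, π ζ * gaussPDF (μ ζ) (S ζ) x)) • a z

namespace Matrix

variable {ι R : Type*} [Fintype ι] [CommRing R]

theorem sub_dotProduct_mulVec_sub {B : Matrix ι ι R} (hB : B.IsSymm) (x μ : ι → R) :
    (x - μ) ⬝ᵥ (B *ᵥ (x - μ)) = x ⬝ᵥ (B *ᵥ x) - 2 * (x ⬝ᵥ (B *ᵥ μ)) + μ ⬝ᵥ (B *ᵥ μ) := by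
  have hsymm : μ ⬝ᵥ (B *ᵥ x) = x ⬝ᵥ (B *ᵥ μ) := by
    rw [dotProduct_mulVec, ← mulVec_transpose, hB.eq, dotProduct_comm]
  simp only [mulVec_sub, dotProduct_sub, sub_dotProduct, hsymm]
  ring

theorem add_quadForm_eq_quadForm_add [DecidableEq ι] {B₁ B₂ : Matrix ι ι R} (h₁ : B₁.IsSymm)
    (h₂ : B₂.IsSymm) (hdet : IsUnit (B₁ + B₂).det) (μ₁ μ₂ x : ι → R) :
    let A := B₁ + B₂
    let μ := A⁻¹ *ᵥ (B₁ *ᵥ μ₁ + B₂ *ᵥ μ₂)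
    (x - μ₁) ⬝ᵥ (B₁ *ᵥ (x - μ₁)) + (x - μ₂) ⬝ᵥ (B₂ *ᵥ (x - μ₂)) =
      (x - μ) ⬝ᵥ (A *ᵥ (x - μ)) + (μ₁ ⬝ᵥ (B₁ *ᵥ μ₁) + μ₂ ⬝ᵥ (B₂ *ᵥ μ₂) - μ ⬝ᵥ (A *ᵥ μ)) := by
  intro A μ
  have hAμ : A *ᵥ μ = B₁ *ᵥ μ₁ + B₂ *ᵥ μ₂ := by
    rw [mulVec_mulVec, mul_nonsing_inv A hdet, one_mulVec]
  rw [sub_dotProduct_mulVec_sub h₁, sub_dotProduct_mulVec_sub h₂,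
    sub_dotProduct_mulVec_sub (h₁.add h₂), hAμ]
  simp only [add_mulVec, dotProduct_add]
  ring

end Matrix

section Gaussian

variable {ι : Type*} [Fintype ι] [DecidableEq ι]

theorem sqrt_two_pi_pow_mul_det_pos {S : Matrix ι ι ℝ} (hS : S.PosDef) :
    0 < Real.sqrt ((2 * Real.pi) ^ Fintype.card ι * S.det) :=
  Real.sqrt_pos.mpr (mul_pos (pow_pos Real.two_pi_pos _) hS.det_pos)

theorem gaussPDF_pos (μ : ι → ℝ) {S : Matrix ι ι ℝ} (hS : S.PosDef) (x : ι → ℝ) :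
    0 < gaussPDF μ S x :=
  mul_pos (inv_pos.mpr (sqrt_two_pi_pow_mul_det_pos hS)) (Real.exp_pos _)

theorem sum_mul_gaussPDF_pos {κ : Type*} [Fintype κ] [Nonempty κ] {π : κ → ℝ} (hπ : ∀ z, 0 < π z)
    (μ : κ → ι → ℝ) {S : κ → Matrix ι ι ℝ} (hS : ∀ z, (S z).PosDef) (x : ι → ℝ) :
    0 < ∑ z, π z * gaussPDF (μ z) (S z) x :=
  Finset.sum_pos (fun z _ => mul_pos (hπ z) (gaussPDF_pos _ (hS z) x)) Finset.univ_nonempty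

theorem exists_gaussPDF_mul_gaussPDF_eq {S₁ S₂ : Matrix ι ι ℝ} (h₁ : S₁.PosDef) (h₂ : S₂.PosDef)
    (μ₁ μ₂ : ι → ℝ) :
    ∃ c > 0, ∃ (μ : ι → ℝ) (S : Matrix ι ι ℝ), S.PosDef ∧
      ∀ x, gaussPDF μ₁ S₁ x * gaussPDF μ₂ S₂ x = c * gaussPDF μ S x := by
  have hA : (S₁⁻¹ + S₂⁻¹).PosDef := h₁.inv.add h₂.inv
  set A := S₁⁻¹ + S₂⁻¹
  set μ := A⁻¹ *ᵥ (S₁⁻¹ *ᵥ μ₁ + S₂⁻¹ *ᵥ μ₂)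
  set k := μ₁ ⬝ᵥ (S₁⁻¹ *ᵥ μ₁) + μ₂ ⬝ᵥ (S₂⁻¹ *ᵥ μ₂) - μ ⬝ᵥ (A *ᵥ μ)
  set N₁ := Real.sqrt ((2 * Real.pi) ^ Fintype.card ι * S₁.det) with hN₁
  set N₂ := Real.sqrt ((2 * Real.pi) ^ Fintype.card ι * S₂.det) with hN₂
  set N := Real.sqrt ((2 * Real.pi) ^ Fintype.card ι * A⁻¹.det) with hN
  have hN_pos : 0 < N := sqrt_two_pi_pow_mul_det_pos hA.inv
  refine ⟨N₁⁻¹ * N₂⁻¹ * N * Real.exp (-(1 / 2) * k),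
    by have := sqrt_two_pi_pow_mul_det_pos h₁; have := sqrt_two_pi_pow_mul_det_pos h₂; positivity,
    μ, A⁻¹, hA.inv, fun x => ?_⟩
  have hsquare := Matrix.add_quadForm_eq_quadForm_add
    (Matrix.isHermitian_iff_isSymm.mp h₁.inv.isHermitian)
    (Matrix.isHermitian_iff_isSymm.mp h₂.inv.isHermitian) hA.det_pos.ne'.isUnit μ₁ μ₂ x
  have hexp : Real.exp (-(1 / 2) * ((x - μ₁) ⬝ᵥ (S₁⁻¹ *ᵥ (x - μ₁)))) *
      Real.exp (-(1 / 2) * ((x - μ₂) ⬝ᵥ (S₂⁻¹ *ᵥ (x - μ₂)))) =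
      Real.exp (-(1 / 2) * k) * Real.exp (-(1 / 2) * ((x - μ) ⬝ᵥ (A *ᵥ (x - μ)))) := by
    rw [← Real.exp_add, ← Real.exp_add, ← mul_add, ← mul_add, hsquare, add_comm]
  simp only [gaussPDF, Matrix.nonsing_inv_nonsing_inv A hA.det_pos.ne'.isUnit, ← hN₁, ← hN₂, ← hN]
  rw [mul_mul_mul_comm, hexp]
  field_simp

end Gaussian

section NormalizedWeights

variable {ι κ 𝕜 E : Type*} [Fintype ι] [Fintype κ] [Field 𝕜] [AddCommGroup E] [Module 𝕜 E]

theorem mul_div_sum_mul {t : 𝕜} (ht : t ≠ 0) (f : ι → 𝕜) (g : κ → 𝕜) (p : ι × κ) :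
    t * (f p.1 * g p.2) / ∑ q : ι × κ, t * (f q.1 * g q.2) =
      (f p.1 / ∑ i, f i) * (g p.2 / ∑ j, g j) := by
  rw [← Finset.mul_sum, Fintype.sum_prod_type, ← Fintype.sum_mul_sum, mul_div_mul_left _ _ ht,
    mul_div_mul_comm]

theorem sum_mul_smul_add {u : ι → 𝕜} {v : κ → 𝕜} (hu : ∑ i, u i = 1) (hv : ∑ j, v j = 1)
    (a : ι → E) (b : κ → E) :
    ∑ p : ι × κ, (u p.1 * v p.2) • (a p.1 + b p.2) = ∑ i, u i • a i + ∑ j, v j • b j := by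
  simp only [smul_add, Finset.sum_add_distrib, Fintype.sum_prod_type, mul_smul,
    ← Finset.smul_sum]
  simp only [← Finset.sum_smul, hu, hv, one_smul]

end NormalizedWeights

theorem memMStar_of_fintype {p q : ℕ} {𝕏 : Set (Fin p → ℝ)} {m : (Fin p → ℝ) → Fin q → ℝ}
    {ι : Type*} [Fintype ι] [Nonempty ι] (π : ι → ℝ) (μ : ι → Fin p → ℝ)
    (S : ι → Matrix (Fin p) (Fin p) ℝ) (a : ι → Fin q → ℝ) (hπ : ∀ i, 0 < π i)
    (hsum : ∑ i, π i = 1) (hS : ∀ i, (S i).PosDef)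
    (hm : ∀ x ∈ 𝕏, m x = ∑ i, ((π i * gaussPDF (μ i) (S i) x) /
        (∑ j, π j * gaussPDF (μ j) (S j) x)) • a i) :
    MemMStar 𝕏 m := by
  let e := (Fintype.equivFin ι).symm
  refine ⟨Fintype.card ι, π ∘ e, μ ∘ e, S ∘ e, a ∘ e, Fintype.card_pos, fun z => hπ _,
    by rwa [Function.comp_def, e.sum_comp], fun z => hS _, fun x hx => ?_⟩
  simp only [Function.comp_apply, e.sum_comp (fun i => π i * gaussPDF (μ i) (S i) x)]
  rw [hm x hx, ← e.sum_comp]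

theorem memMStar_add {p q : ℕ} (𝕏 : Set (Fin p → ℝ))
    (m₁ m₂ : (Fin p → ℝ) → Fin q → ℝ)
    (h₁ : MemMStar 𝕏 m₁) (h₂ : MemMStar 𝕏 m₂) :
    MemMStar 𝕏 (m₁ + m₂) := by
  obtain ⟨n₁, π₁, μ₁, S₁, a₁, hn₁, hπ₁, -, hS₁, hm₁⟩ := h₁
  obtain ⟨n₂, π₂, μ₂, S₂, a₂, hn₂, hπ₂, -, hS₂, hm₂⟩ := h₂
  have : Nonempty (Fin n₁) := Fin.pos_iff_nonempty.mp hn₁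
  have : Nonempty (Fin n₂) := Fin.pos_iff_nonempty.mp hn₂
  choose c hc μ S hS hprod using fun (z : Fin n₁) (ζ : Fin n₂) =>
    exists_gaussPDF_mul_gaussPDF_eq (hS₁ z) (hS₂ ζ) (μ₁ z) (μ₂ ζ)
  have hπc : ∀ r : Fin n₁ × Fin n₂, 0 < π₁ r.1 * π₂ r.2 * c r.1 r.2 := fun r =>
    mul_pos (mul_pos (hπ₁ _) (hπ₂ _)) (hc _ _)
  set C := ∑ r : Fin n₁ × Fin n₂, π₁ r.1 * π₂ r.2 * c r.1 r.2
  have hC : 0 < C := Finset.sum_pos (fun r _ => hπc r) Finset.univ_nonempty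
  refine memMStar_of_fintype (fun r => π₁ r.1 * π₂ r.2 * c r.1 r.2 / C) (fun r => μ r.1 r.2)
    (fun r => S r.1 r.2) (fun r => a₁ r.1 + a₂ r.2) (fun r => div_pos (hπc r) hC)
    (by rw [← Finset.sum_div, div_self hC.ne']) (fun r => hS _ _) fun x hx => ?_
  have hweight : ∀ r : Fin n₁ × Fin n₂,
      π₁ r.1 * π₂ r.2 * c r.1 r.2 / C * gaussPDF (μ r.1 r.2) (S r.1 r.2) x =
        C⁻¹ * ((π₁ r.1 * gaussPDF (μ₁ r.1) (S₁ r.1) x) * (π₂ r.2 * gaussPDF (μ₂ r.2) (S₂ r.2) x)) := by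
    intro r
    rw [mul_mul_mul_comm, hprod]
    ring
  simp only [hweight, mul_div_sum_mul (inv_ne_zero hC.ne')
    (fun z => π₁ z * gaussPDF (μ₁ z) (S₁ z) x) (fun ζ => π₂ ζ * gaussPDF (μ₂ ζ) (S₂ ζ) x)]
  rw [Pi.add_apply, hm₁ x hx, hm₂ x hx]
  refine (sum_mul_smul_add ?_ ?_ _ _).symm
  · rw [← Finset.sum_div, div_self (sum_mul_gaussPDF_pos hπ₁ μ₁ hS₁ x).ne']
  · rw [← Finset.sum_div, div_self (sum_mul_gaussPDF_pos hπ₂ μ₂ hS₂ x).ne']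
end

section
/- Let ℒ*_q(𝕏) be the class of conditional densities f(y|x) = Σ_{z=1}^{n} [π_z φ_p(x; μ_z, Σ_z) φ_q(y; a_z, C_z)] / [Σ_{ζ=1}^{n} π_ζ φ_p(x; μ_ζ, Σ_ζ)], with n ∈ ℕ, mixing weights π_z > 0 summing to 1, μ_z ∈ ℝ^p, a_z ∈ ℝ^q, and Σ_z, C_z symmetric positive-definite. If f₁ ∈ ℒ*_q(𝕏) and f₂ ∈ ℒ*_r(𝕏), then the pointwise product f₁₂(y|x) = f₁(y_{[1]}|x)·f₂(y_{[2]}|x), where y = (y_{[1]}, y_{[2]}) ∈ ℝ^{q+r}, belongs to ℒ*_{q+r}(𝕏). -/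
open scoped Matrix BigOperators

/-- Membership in ℒ*_q(𝕏): Gaussian-gated mixtures of Gaussian experts with
input-independent expert means, where the output index type is `ι` (e.g. `Fin q`). -/
def MemLStar {p : ℕ} (ι : Type*) [Fintype ι] [DecidableEq ι] (𝕏 : Set (Fin p → ℝ))
    (f : (Fin p → ℝ) → (ι → ℝ) → ℝ) : Prop :=
  ∃ (n : ℕ) (π : Fin n → ℝ) (μ : Fin n → Fin p → ℝ)
    (S : Fin n → Matrix (Fin p) (Fin p) ℝ) (a : Fin n → ι → ℝ)
    (C : Fin n → Matrix ι ι ℝ),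
    0 < n ∧ (∀ z, 0 < π z) ∧ (∑ z, π z = 1) ∧ (∀ z, (S z).PosDef) ∧
    (∀ z, (C z).PosDef) ∧
    ∀ x ∈ 𝕏, ∀ y : ι → ℝ,
      f x y = ∑ z, (π z * gaussPDF (μ z) (S z) x * gaussPDF (a z) (C z) y) /
        (∑ ζ, π ζ * gaussPDF (μ ζ) (S ζ) x)

/-!
Expand the product of the two mixtures as a double sum over pairs `(z, w)` of components.
For each pair, completing the square shows that the product of the two gating densities in `x`
is a positive constant times a single Gaussian density in `x`; the constant is absorbed into the
weight `π₁ z * π₂ w`. The product of the two expert densities in `y₁` and `y₂` is the Gaussian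
density in `y = (y₁, y₂)` with block-diagonal covariance. Rescaling all weights by a common
factor does not change the ratio, so they can be normalised to sum to one.
-/

open Matrix

section Gaussian

variable {ι κ : Type*} [Fintype ι] [Fintype κ]

theorem Matrix.IsSymm.dotProduct_mulVec_comm {R : Type*} [CommSemiring R] {A : Matrix ι ι R}
    (hA : A.IsSymm) (u v : ι → R) : u ⬝ᵥ A *ᵥ v = v ⬝ᵥ A *ᵥ u := by
  rw [dotProduct_mulVec, ← mulVec_transpose, hA.eq, dotProduct_comm]

theorem dotProduct_mulVec_add_complete_square {R : Type*} [CommRing R] {A B : Matrix ι ι R}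
    (hA : A.IsSymm) (hB : B.IsSymm) {μ ν m : ι → R} (hm : (A + B) *ᵥ m = A *ᵥ μ + B *ᵥ ν)
    (x : ι → R) :
    (x - μ) ⬝ᵥ (A *ᵥ (x - μ)) + (x - ν) ⬝ᵥ (B *ᵥ (x - ν)) =
      (x - m) ⬝ᵥ ((A + B) *ᵥ (x - m)) +
        (μ ⬝ᵥ (A *ᵥ μ) + ν ⬝ᵥ (B *ᵥ ν) - m ⬝ᵥ ((A + B) *ᵥ m)) := by
  have hxm : x ⬝ᵥ ((A + B) *ᵥ m) = x ⬝ᵥ (A *ᵥ μ) + x ⬝ᵥ (B *ᵥ ν) := by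
    rw [hm, dotProduct_add]
  simp only [mulVec_sub, add_mulVec, sub_dotProduct, dotProduct_sub, dotProduct_add] at hxm ⊢
  rw [hA.dotProduct_mulVec_comm μ x, hB.dotProduct_mulVec_comm ν x,
    hA.dotProduct_mulVec_comm m x, hB.dotProduct_mulVec_comm m x]
  linear_combination 2 * hxm

theorem dotProduct_fromBlocks_mulVec {R : Type*} [NonUnitalNonAssocSemiring R]
    (C : Matrix ι ι R) (D : Matrix κ κ R) (u : ι → R) (v : κ → R) :
    Sum.elim u v ⬝ᵥ (fromBlocks C 0 0 D *ᵥ Sum.elim u v) = u ⬝ᵥ (C *ᵥ u) + v ⬝ᵥ (D *ᵥ v) := by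
  simp [fromBlocks_mulVec, sumElim_dotProduct_sumElim]

theorem Matrix.PosDef.fromBlocks_zero {C : Matrix ι ι ℝ} {D : Matrix κ κ ℝ} (hC : C.PosDef)
    (hD : D.PosDef) : (fromBlocks C 0 0 D).PosDef := by
  refine .of_dotProduct_mulVec_pos (hC.isHermitian.fromBlocks (by simp) hD.isHermitian)
    fun w hw => ?_
  rw [star_trivial, ← Sum.elim_comp_inl_inr w, dotProduct_fromBlocks_mulVec]
  by_cases hl : w ∘ Sum.inl = 0
  · have hr : w ∘ Sum.inr ≠ 0 := fun hr =>
      hw (by rw [← Sum.elim_comp_inl_inr w, hl, hr]; ext (_ | _) <;> rfl)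
    simpa [hl] using hD.dotProduct_mulVec_pos hr
  · exact add_pos_of_pos_of_nonneg (by simpa using hC.dotProduct_mulVec_pos hl)
      (by simpa using hD.posSemidef.dotProduct_mulVec_nonneg (w ∘ Sum.inr))

variable [DecidableEq ι] [DecidableEq κ]

theorem gaussPDF_reindex (e : ι ≃ κ) (μ : ι → ℝ) (S : Matrix ι ι ℝ) (y : κ → ℝ) :
    gaussPDF (μ ∘ e.symm) (reindex e e S) y = gaussPDF μ S (y ∘ e) := by
  have hy : (y - μ ∘ e.symm) ∘ e = y ∘ e - μ := by ext; simp
  rw [gaussPDF, gaussPDF, Fintype.card_congr e, det_reindex_self, inv_reindex, reindex_apply,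
    submatrix_mulVec_equiv, Equiv.symm_symm, dotProduct_comp_equiv_symm, hy]

theorem gaussPDF_sumElim {C : Matrix ι ι ℝ} {D : Matrix κ κ ℝ} (hC : 0 < C.det) (hD : 0 < D.det)
    (a u : ι → ℝ) (b v : κ → ℝ) :
    gaussPDF (Sum.elim a b) (fromBlocks C 0 0 D) (Sum.elim u v) =
      gaussPDF a C u * gaussPDF b D v := by
  have hCu : IsUnit C := (isUnit_iff_isUnit_det C).mpr hC.ne'.isUnit
  have hDu : IsUnit D := (isUnit_iff_isUnit_det D).mpr hD.ne'.isUnit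
  have hinv : (fromBlocks C 0 0 D)⁻¹ = fromBlocks C⁻¹ 0 0 D⁻¹ := by
    simpa using inv_fromBlocks_zero₂₁_of_isUnit_iff C 0 D (iff_of_true hCu hDu)
  have hsub : Sum.elim u v - Sum.elim a b = Sum.elim (u - a) (v - b) := by ext (_ | _) <;> rfl
  simp only [gaussPDF, hinv, hsub, dotProduct_fromBlocks_mulVec, det_fromBlocks_zero₂₁,
    Fintype.card_sum, pow_add, mul_mul_mul_comm _ _ C.det,
    Real.sqrt_mul (mul_pos (pow_pos Real.two_pi_pos _) hC).le, mul_inv, mul_add, Real.exp_add]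
  ring

theorem gaussPDF_mul_gaussPDF {S T : Matrix ι ι ℝ} (hS : S.PosDef) (hT : T.PosDef) (μ ν : ι → ℝ) :
    ∃ c > 0, ∃ (m : ι → ℝ) (E : Matrix ι ι ℝ), E.PosDef ∧
      ∀ x, gaussPDF μ S x * gaussPDF ν T x = c * gaussPDF m E x := by
  -- precisions add, and the mean is the precision-weighted average of the means
  set P := S⁻¹ + T⁻¹
  have hP : P.PosDef := hS.inv.add hT.inv
  set m := P⁻¹ *ᵥ (S⁻¹ *ᵥ μ + T⁻¹ *ᵥ ν)
  have hm : P *ᵥ m = S⁻¹ *ᵥ μ + T⁻¹ *ᵥ ν := by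
    rw [mulVec_mulVec, mul_nonsing_inv _ hP.det_pos.ne'.isUnit, one_mulVec]
  set k := μ ⬝ᵥ (S⁻¹ *ᵥ μ) + ν ⬝ᵥ (T⁻¹ *ᵥ ν) - m ⬝ᵥ (P *ᵥ m)
  have hZ {M : Matrix ι ι ℝ} (hM : M.PosDef) : 0 < √((2 * Real.pi) ^ Fintype.card ι * M.det) :=
    Real.sqrt_pos.mpr (mul_pos (pow_pos Real.two_pi_pos _) hM.det_pos)
  have hZS := hZ hS
  have hZT := hZ hT
  have hZP := hZ hP.inv
  refine ⟨√((2 * Real.pi) ^ Fintype.card ι * P⁻¹.det) * Real.exp (-(1 / 2) * k) /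
      (√((2 * Real.pi) ^ Fintype.card ι * S.det) * √((2 * Real.pi) ^ Fintype.card ι * T.det)),
    by positivity, m, P⁻¹, hP.inv, fun x => ?_⟩
  have hsq := dotProduct_mulVec_add_complete_square (isHermitian_iff_isSymm.mp hS.inv.isHermitian)
    (isHermitian_iff_isSymm.mp hT.inv.isHermitian) hm x
  have hexp : Real.exp (-(1 / 2) * ((x - μ) ⬝ᵥ (S⁻¹ *ᵥ (x - μ)))) *
      Real.exp (-(1 / 2) * ((x - ν) ⬝ᵥ (T⁻¹ *ᵥ (x - ν)))) =
      Real.exp (-(1 / 2) * k) * Real.exp (-(1 / 2) * ((x - m) ⬝ᵥ (P *ᵥ (x - m)))) := by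
    rw [← Real.exp_add, ← Real.exp_add]
    congr 1
    linear_combination (-(1 / 2 : ℝ)) * hsq
  rw [gaussPDF, gaussPDF, gaussPDF, nonsing_inv_nonsing_inv _ hP.det_pos.ne'.isUnit,
    mul_mul_mul_comm, hexp]
  field_simp

end Gaussian

section Mixture

variable {p : ℕ} {𝕏 : Set (Fin p → ℝ)} {ι κ : Type*} [Fintype ι] [DecidableEq ι]
  [Fintype κ] [DecidableEq κ]

theorem memLStar_of_fintype {J : Type*} [Fintype J] [Nonempty J]
    {f : (Fin p → ℝ) → (ι → ℝ) → ℝ} (w : J → ℝ) (μ : J → Fin p → ℝ)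
    (S : J → Matrix (Fin p) (Fin p) ℝ) (a : J → ι → ℝ) (C : J → Matrix ι ι ℝ)
    (hw : ∀ j, 0 < w j) (hS : ∀ j, (S j).PosDef) (hC : ∀ j, (C j).PosDef)
    (hf : ∀ x ∈ 𝕏, ∀ y, f x y = (∑ j, w j * gaussPDF (μ j) (S j) x * gaussPDF (a j) (C j) y) /
      ∑ j, w j * gaussPDF (μ j) (S j) x) :
    MemLStar ι 𝕏 f := by
  set e := (Fintype.equivFin J).symm
  set W := ∑ j, w j
  have hW : 0 < W := Finset.sum_pos (fun j _ => hw j) Finset.univ_nonempty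
  refine ⟨Fintype.card J, fun z => w (e z) / W, fun z => μ (e z), fun z => S (e z),
    fun z => a (e z), fun z => C (e z), Fintype.card_pos, fun z => div_pos (hw _) hW, ?_,
    fun z => hS _, fun z => hC _, fun x hx y => ?_⟩
  · rw [← Finset.sum_div, e.sum_comp w, div_self hW.ne']
  · simp only [← Finset.sum_div, div_mul_eq_mul_div,
      e.sum_comp fun j => w j * gaussPDF (μ j) (S j) x * gaussPDF (a j) (C j) y,
      e.sum_comp fun j => w j * gaussPDF (μ j) (S j) x, div_div_div_cancel_right₀ hW.ne', hf x hx y]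

theorem MemLStar.reindex {f : (Fin p → ℝ) → (ι → ℝ) → ℝ} (hf : MemLStar ι 𝕏 f) (e : ι ≃ κ) :
    MemLStar κ 𝕏 (fun x y => f x (y ∘ e)) := by
  obtain ⟨n, π, μ, S, a, C, hn, hπ, hπ_sum, hS, hC, hf⟩ := hf
  refine ⟨n, π, μ, S, fun z => a z ∘ e.symm, fun z => Matrix.reindex e e (C z), hn, hπ, hπ_sum,
    hS, fun z => (hC z).submatrix e.symm.injective, fun x hx y => ?_⟩
  simp only [gaussPDF_reindex]
  exact hf x hx (y ∘ e)

theorem MemLStar.mul_inl_inr {f₁ : (Fin p → ℝ) → (ι → ℝ) → ℝ} {f₂ : (Fin p → ℝ) → (κ → ℝ) → ℝ}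
    (h₁ : MemLStar ι 𝕏 f₁) (h₂ : MemLStar κ 𝕏 f₂) :
    MemLStar (ι ⊕ κ) 𝕏 (fun x y => f₁ x (y ∘ Sum.inl) * f₂ x (y ∘ Sum.inr)) := by
  obtain ⟨n₁, π₁, μ₁, S₁, a₁, C₁, hn₁, hπ₁, -, hS₁, hC₁, hf₁⟩ := h₁
  obtain ⟨n₂, π₂, μ₂, S₂, a₂, C₂, hn₂, hπ₂, -, hS₂, hC₂, hf₂⟩ := h₂
  have : Nonempty (Fin n₁) := Fin.pos_iff_nonempty.mp hn₁
  have : Nonempty (Fin n₂) := Fin.pos_iff_nonempty.mp hn₂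
  choose c hc μ S hS hgate using fun j : Fin n₁ × Fin n₂ =>
    gaussPDF_mul_gaussPDF (hS₁ j.1) (hS₂ j.2) (μ₁ j.1) (μ₂ j.2)
  refine memLStar_of_fintype (fun j => π₁ j.1 * π₂ j.2 * c j) μ S
    (fun j => Sum.elim (a₁ j.1) (a₂ j.2)) (fun j => fromBlocks (C₁ j.1) 0 0 (C₂ j.2))
    (fun j => mul_pos (mul_pos (hπ₁ j.1) (hπ₂ j.2)) (hc j)) hS
    (fun j => (hC₁ j.1).fromBlocks_zero (hC₂ j.2)) fun x hx y => ?_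
  have hterm (j : Fin n₁ × Fin n₂) :
      π₁ j.1 * π₂ j.2 * c j * gaussPDF (μ j) (S j) x =
        π₁ j.1 * gaussPDF (μ₁ j.1) (S₁ j.1) x * (π₂ j.2 * gaussPDF (μ₂ j.2) (S₂ j.2) x) := by
    rw [mul_assoc, ← hgate]; ring
  have hexpert (j : Fin n₁ × Fin n₂) :
      gaussPDF (Sum.elim (a₁ j.1) (a₂ j.2)) (fromBlocks (C₁ j.1) 0 0 (C₂ j.2)) y =
        gaussPDF (a₁ j.1) (C₁ j.1) (y ∘ Sum.inl) * gaussPDF (a₂ j.2) (C₂ j.2) (y ∘ Sum.inr) := by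
    rw [← gaussPDF_sumElim (hC₁ j.1).det_pos (hC₂ j.2).det_pos, Sum.elim_comp_inl_inr]
  simp only [hf₁ x hx, hf₂ x hx, ← Finset.sum_div, div_mul_div_comm, Finset.sum_mul_sum,
    ← Fintype.sum_prod_type', hterm, hexpert]
  congr 1
  exact Finset.sum_congr rfl fun j _ => by ring

end Mixture

theorem memLStar_mul {p q r : ℕ} (𝕏 : Set (Fin p → ℝ))
    (f₁ : (Fin p → ℝ) → (Fin q → ℝ) → ℝ) (f₂ : (Fin p → ℝ) → (Fin r → ℝ) → ℝ)
    (h₁ : MemLStar (Fin q) 𝕏 f₁) (h₂ : MemLStar (Fin r) 𝕏 f₂) :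
    MemLStar (Fin (q + r)) 𝕏
      (fun x y => f₁ x (fun i => y (Fin.castAdd r i)) *
        f₂ x (fun i => y (Fin.natAdd q i))) :=
  (h₁.mul_inl_inr h₂).reindex finSumFinEquiv
end

section
/- Let 𝕏 ⊂ ℝ^p be a compact set and q ∈ ℕ. The class ℳ*_q(𝕏) of Gaussian-gated constant-expert mean functions m(x) = Σ_{z=1}^{n} [π_z φ_p(x; μ_z, Σ_z) / Σ_{ζ} π_ζ φ_p(x; μ_ζ, Σ_ζ)]·a_z is fundamental in C_q(𝕏), the space of continuous functions 𝕏 → ℝ^q, with respect to the induced norm ‖u‖_{q,∞} = Σ_{j=1}^q sup_{x∈𝕏}|u_j(x)|. That is, for every continuous u: 𝕏 → ℝ^q and every ε > 0, there exists m ∈ ℳ*_q(𝕏) with ‖m − u‖_{q,∞} < ε. -/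
open scoped Matrix BigOperators

/-! Take experts `a z = u (c z)` at a finite net `c` of `𝕏`, equal mixing weights and
covariances `s • 1`. The gates are then the softmax of `-‖x - c z‖² / (2 s)`; a centre whose
squared distance to `x` exceeds that of the nearest centre by `b` gets weight at most `2 s / b`.
So as `s → 0` the mixture becomes a convex combination of values of `u` at points near `x`, up to
an error controlled by the boundedness of `u` on the compact `𝕏`; uniform continuity does the
rest. -/

open Finset

noncomputable def softmax {ι : Type*} [Fintype ι] (f : ι → ℝ) (z : ι) : ℝ :=
  Real.exp (f z) / ∑ ζ, Real.exp (f ζ)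

section Softmax

variable {ι E : Type*} [Fintype ι] [SeminormedAddCommGroup E] [NormedSpace ℝ E]

theorem softmax_nonneg (f : ι → ℝ) (z : ι) : 0 ≤ softmax f z := by
  unfold softmax; positivity

theorem sum_softmax [Nonempty ι] (f : ι → ℝ) : ∑ z, softmax f z = 1 := by
  simp only [softmax, ← sum_div]
  exact div_self (sum_pos (fun ζ _ => Real.exp_pos (f ζ)) univ_nonempty).ne'

theorem softmax_le_exp_sub (f : ι → ℝ) (z z₀ : ι) : softmax f z ≤ Real.exp (f z - f z₀) := by
  rw [Real.exp_sub]
  exact div_le_div_of_nonneg_left (Real.exp_nonneg _) (Real.exp_pos _)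
    (single_le_sum (fun ζ _ => Real.exp_nonneg (f ζ)) (mem_univ z₀))

theorem softmax_neg_div_le_of_add_le {d : ι → ℝ} {t b : ℝ} (ht : 0 < t) (hb : 0 < b)
    {z z₀ : ι} (hgap : d z₀ + b ≤ d z) : softmax (fun ζ => -d ζ / t) z ≤ t / b := by
  have hbt : 0 < b / t := div_pos hb ht
  calc softmax (fun ζ => -d ζ / t) z ≤ Real.exp (-d z / t - -d z₀ / t) := softmax_le_exp_sub _ _ _
    _ ≤ Real.exp (-(b / t)) := by
        gcongr
        rw [← sub_div, ← neg_div]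
        exact div_le_div_of_nonneg_right (by linarith) ht.le
    _ = (Real.exp (b / t))⁻¹ := Real.exp_neg _
    _ ≤ (b / t)⁻¹ := inv_anti₀ hbt (by linarith [Real.add_one_le_exp (b / t)])
    _ = t / b := inv_div b t

theorem norm_sum_smul_sub_le {g : ι → ℝ} (hg : ∀ z, 0 ≤ g z) (hg1 : ∑ z, g z = 1)
    (a : ι → E) (v : E) :
    ‖∑ z, g z • a z - v‖ ≤ ∑ z, g z * ‖a z - v‖ := by
  have hv : ∑ z, g z • a z - v = ∑ z, g z • (a z - v) := by
    simp only [smul_sub, sum_sub_distrib, ← sum_smul, hg1, one_smul]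
  rw [hv]
  refine (norm_sum_le _ _).trans_eq (sum_congr rfl fun z _ => ?_)
  rw [norm_smul, Real.norm_of_nonneg (hg z)]

theorem norm_sum_softmax_smul_sub_le {d : ι → ℝ} {a : ι → E} {v : E} {t r b ε M : ℝ}
    (ht : 0 < t) (hb : 0 < b) {z₀ : ι} (hz₀ : d z₀ + b ≤ r) (hnear : ∀ z, d z < r → ‖a z - v‖ ≤ ε)
    (hbound : ∀ z, ‖a z - v‖ ≤ M) :
    ‖∑ z, softmax (fun ζ => -d ζ / t) z • a z - v‖ ≤ ε + Fintype.card ι * M / b * t := by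
  have : Nonempty ι := ⟨z₀⟩
  set g := softmax fun ζ => -d ζ / t
  have hε : 0 ≤ ε := (norm_nonneg _).trans (hnear z₀ (by linarith))
  have hM : 0 ≤ M := (norm_nonneg _).trans (hbound z₀)
  have hg : ∀ z, 0 ≤ g z := softmax_nonneg _
  have hterm : ∀ z, g z * ‖a z - v‖ ≤ g z * ε + M * (t / b) := fun z => by
    by_cases hz : d z < r
    · have := mul_le_mul_of_nonneg_left (hnear z hz) (hg z)
      have : 0 ≤ M * (t / b) := by positivity
      linarith
    · have hgz : g z ≤ t / b :=
        softmax_neg_div_le_of_add_le ht hb (z₀ := z₀) (by linarith [not_lt.1 hz])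
      have := mul_le_mul hgz (hbound z) (norm_nonneg _) (by positivity)
      have := mul_nonneg (hg z) hε
      linarith
  calc ‖∑ z, g z • a z - v‖ ≤ ∑ z, g z * ‖a z - v‖ :=
        norm_sum_smul_sub_le hg (sum_softmax _) a v
    _ ≤ ∑ z, (g z * ε + M * (t / b)) := sum_le_sum fun z _ => hterm z
    _ = ε + Fintype.card ι * M / b * t := by
        rw [sum_add_distrib, ← sum_mul, sum_softmax, sum_const, card_univ, nsmul_eq_mul]
        ring

end Softmax

theorem dist_le_sqrt_dotProduct_self {ι : Type*} [Fintype ι] (x y : ι → ℝ) :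
    dist x y ≤ √((x - y) ⬝ᵥ (x - y)) :=
  (dist_pi_le_iff (Real.sqrt_nonneg _)).2 fun i => by
    rw [Real.dist_eq]
    refine Real.abs_le_sqrt ?_
    rw [sq]
    exact single_le_sum (f := fun i => (x i - y i) * (x i - y i))
      (fun i _ => mul_self_nonneg _) (mem_univ i)

theorem IsCompact.exists_fin_cover {α : Type*} [TopologicalSpace α] {K : Set α}
    (hK : IsCompact K) (U : α → Set α) (hU : ∀ x ∈ K, U x ∈ nhds x) :
    ∃ (n : ℕ) (c : Fin n → α), (∀ z, c z ∈ K) ∧ K ⊆ ⋃ z, U (c z) := by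
  obtain ⟨t, htK, hcover⟩ := hK.elim_nhds_subcover U hU
  refine ⟨t.card, fun z => t.equivFin.symm z, fun z => htK _ (t.equivFin.symm z).2, ?_⟩
  intro x hx
  obtain ⟨c, hc, hxc⟩ := Set.mem_iUnion₂.1 (hcover hx)
  exact Set.mem_iUnion.2 ⟨t.equivFin ⟨c, hc⟩, by simpa using hxc⟩

theorem gaussPDF_smul_one {ι : Type*} [Fintype ι] [DecidableEq ι] {s : ℝ} (hs : 0 < s)
    (μ x : ι → ℝ) :
    gaussPDF μ (s • (1 : Matrix ι ι ℝ)) x =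
      (√((2 * Real.pi) ^ Fintype.card ι * s ^ Fintype.card ι))⁻¹ *
        Real.exp (-((x - μ) ⬝ᵥ (x - μ)) / (2 * s)) := by
  have hinv : (s • (1 : Matrix ι ι ℝ))⁻¹ = s⁻¹ • 1 := by
    apply Matrix.inv_eq_right_inv
    rw [Matrix.smul_mul, Matrix.mul_smul, one_mul, smul_smul, mul_inv_cancel₀ hs.ne', one_smul]
  rw [gaussPDF, hinv, Matrix.det_smul, Matrix.det_one, mul_one, Matrix.smul_mulVec,
    Matrix.one_mulVec, dotProduct_smul, smul_eq_mul]
  congr 2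
  field_simp

theorem memMStar_softmax {p q n : ℕ} (𝕏 : Set (Fin p → ℝ)) (hn : 0 < n) {s : ℝ} (hs : 0 < s)
    (c : Fin n → Fin p → ℝ) (a : Fin n → Fin q → ℝ) :
    MemMStar 𝕏 fun x => ∑ z, softmax (fun ζ => -((x - c ζ) ⬝ᵥ (x - c ζ)) / (2 * s)) z • a z := by
  have hnR : (0 : ℝ) < n := Nat.cast_pos.2 hn
  have hπ : ∑ _z : Fin n, (n : ℝ)⁻¹ = 1 := by
    rw [sum_const, card_univ, Fintype.card_fin, nsmul_eq_mul, mul_inv_cancel₀ hnR.ne']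
  refine ⟨n, fun _ => (n : ℝ)⁻¹, c, fun _ => s • 1, a, hn, fun _ => inv_pos.2 hnR, hπ,
    fun _ => Matrix.PosDef.one.smul hs, fun x _ => sum_congr rfl fun z _ => ?_⟩
  set k : ℝ := (n : ℝ)⁻¹ * (√((2 * Real.pi) ^ p * s ^ p))⁻¹
  have hk : k ≠ 0 := by positivity
  have hgauss : ∀ ζ, (n : ℝ)⁻¹ * gaussPDF (c ζ) (s • 1) x =
      k * Real.exp (-((x - c ζ) ⬝ᵥ (x - c ζ)) / (2 * s)) := fun ζ => by
    rw [gaussPDF_smul_one hs, Fintype.card_fin, ← mul_assoc]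
  simp only [hgauss, ← mul_sum, mul_div_mul_left _ _ hk, softmax]

theorem exists_softmax_approx {ι E : Type*} [Fintype ι] [SeminormedAddCommGroup E]
    [NormedSpace ℝ E] {𝕏 : Set (ι → ℝ)} (hX : IsCompact 𝕏) (hXne : 𝕏.Nonempty)
    {u : (ι → ℝ) → E} (hu : ContinuousOn u 𝕏) {ε : ℝ} (hε : 0 < ε) :
    ∃ (n : ℕ) (c : Fin n → ι → ℝ) (s : ℝ), 0 < n ∧ 0 < s ∧ ∀ x ∈ 𝕏,
      ‖∑ z, softmax (fun ζ => -((x - c ζ) ⬝ᵥ (x - c ζ)) / (2 * s)) z • u (c z) - u x‖ < ε := by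
  obtain ⟨C, hC⟩ := hX.exists_bound_of_continuousOn hu
  obtain ⟨δ, hδ, hδu⟩ :=
    Metric.uniformContinuousOn_iff.1 (hX.uniformContinuousOn_of_continuous hu) (ε / 2) (half_pos hε)
  obtain ⟨n, c, hcX, hcover⟩ := hX.exists_fin_cover (fun y => {x | (x - y) ⬝ᵥ (x - y) < δ ^ 2 / 2})
    fun y _ => (isOpen_lt (by fun_prop) continuous_const).mem_nhds (by simp [hδ])
  obtain ⟨x₀, hx₀⟩ := hXne
  have hn : 0 < n := (Set.mem_iUnion.1 (hcover hx₀)).choose.pos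
  obtain ⟨s, hs, hsmall⟩ := exists_pos_mul_lt (half_pos hε) (2 * (n * (2 * C) / (δ ^ 2 / 2)))
  refine ⟨n, c, s, hn, hs, fun x hx => ?_⟩
  obtain ⟨z₀, hz₀ : (x - c z₀) ⬝ᵥ (x - c z₀) < δ ^ 2 / 2⟩ := Set.mem_iUnion.1 (hcover hx)
  have hnear : ∀ z, (x - c z) ⬝ᵥ (x - c z) < δ ^ 2 → ‖u (c z) - u x‖ ≤ ε / 2 := fun z hz => by
    have hxz : dist x (c z) < δ :=
      (dist_le_sqrt_dotProduct_self x (c z)).trans_lt ((Real.sqrt_lt' hδ).2 hz)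
    rw [← dist_eq_norm, dist_comm]
    exact (hδu x hx (c z) (hcX z) hxz).le
  have hbound : ∀ z, ‖u (c z) - u x‖ ≤ 2 * C := fun z =>
    (norm_sub_le _ _).trans (by linarith [hC _ (hcX z), hC x hx])
  calc _ ≤ ε / 2 + Fintype.card (Fin n) * (2 * C) / (δ ^ 2 / 2) * (2 * s) :=
        norm_sum_softmax_smul_sub_le (by positivity) (by positivity) (z₀ := z₀) (r := δ ^ 2)
          (by linarith) hnear hbound
    _ < ε := by rw [Fintype.card_fin]; linarith

theorem memMStar_fundamental_general {p q : ℕ}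
    (𝕏 : Set (Fin p → ℝ)) (hX : IsCompact 𝕏) (hXne : 𝕏.Nonempty)
    (u : (Fin p → ℝ) → Fin q → ℝ) (hu : ∀ j : Fin q, ContinuousOn (fun x => u x j) 𝕏)
    (ε : ℝ) (hε : 0 < ε) :
    ∃ m : (Fin p → ℝ) → Fin q → ℝ, MemMStar 𝕏 m ∧
      (∑ j : Fin q, ⨆ x : 𝕏, |m x j - u x j|) < ε := by
  obtain ⟨n, c, s, hn, hs, happrox⟩ :=
    exists_softmax_approx hX hXne (continuousOn_pi.2 hu) (ε := ε / (q + 1)) (by positivity)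
  refine ⟨_, memMStar_softmax 𝕏 hn hs c (u ∘ c), (sum_le_sum fun j _ => Real.iSup_le
    (fun x : 𝕏 => (norm_le_pi_norm _ j).trans (happrox x x.2).le) (by positivity)).trans_lt ?_⟩
  calc ∑ _j : Fin q, ε / (q + 1) = q / (q + 1) * ε := by
        rw [sum_const, card_univ, Fintype.card_fin, nsmul_eq_mul]; ring
    _ < ε := mul_lt_of_lt_one_left hε ((div_lt_one (by positivity)).2 (lt_add_one _))

theorem memMStar_fundamental {p q : ℕ} (hq : 0 < q)
    (𝕏 : Set (Fin p → ℝ)) (hX : IsCompact 𝕏) (hXne : 𝕏.Nonempty)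
    (u : (Fin p → ℝ) → Fin q → ℝ) (hu : ∀ j : Fin q, ContinuousOn (fun x => u x j) 𝕏)
    (ε : ℝ) (hε : 0 < ε) :
    ∃ m : (Fin p → ℝ) → Fin q → ℝ, MemMStar 𝕏 m ∧
      (∑ j : Fin q, ⨆ x : 𝕏, |m x j - u x j|) < ε :=
  memMStar_fundamental_general 𝕏 hX hXne u hu ε hε
end
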